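/- (Upper bound lemma.) Let A be a solution of the proto-cell ODE and suppose there exists ε > 0 such that A_i(t) ≥ ε for all t ≥ 0 and all i ∈ S_me. Then for every moiety combination b, the quantity bᵀA(t) is bounded above on [0,∞). In particular, if the network is conservative with mass vector m (all components strictly positive, mᵀS = 0), the cytoplasmic density D(t) = mᵀA(t) is bounded on [0,∞). -/

import Mathlib

open Matrix Filter

/-!
For a moiety combination `b ≥ 0` the reaction term drops out of
`d/dt (bᵀA) = bᵀf_nu − f_me(A) b_me − λ(A) bᵀA`. Since `f_me` is monotone and positive once
every species of `S_me` is positive, `A_i ≥ ε` on `S_me` gives `f_me(A(t)) ≥ c > 0` uniformly,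
so `x = bᵀA ≥ 0` obeys `x' ≤ K − (c / C_me) x` and cannot cross any level above `K C_me / c`.
-/

theorem HasDerivWithinAt.const_dotProduct {ι : Type*} [Fintype ι] {A : ℝ → ι → ℝ}
    {A' : ι → ℝ} {s : Set ℝ} {t : ℝ} (hA : HasDerivWithinAt A A' s t) (b : ι → ℝ) :
    HasDerivWithinAt (fun u => b ⬝ᵥ A u) (b ⬝ᵥ A') s t := by
  simpa only [dotProduct] using
    HasDerivWithinAt.fun_sum fun i _ => (hasDerivWithinAt_pi.1 hA i).const_mul (b i)

theorem le_of_hasDerivWithinAt_le_sub_mul {x x' : ℝ → ℝ} {a K c M : ℝ}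
    (hx : ∀ t ≥ a, HasDerivWithinAt x (x' t) (Set.Ici a) t)
    (hx' : ∀ t ≥ a, x' t ≤ K - c * x t) (ha : x a ≤ M) (hM : K < c * M) :
    ∀ t ≥ a, x t ≤ M := fun t ht =>
  image_le_of_deriv_right_lt_deriv_boundary' (B := fun _ => M) (B' := fun _ => 0)
    (fun s hs => ((hx s hs.1).mono Set.Icc_subset_Ici_self).continuousWithinAt)
    (fun s hs => (hx s hs.1).mono (Set.Ici_subset_Ici.2 hs.1))
    ha continuousOn_const (fun s _ => hasDerivWithinAt_const s _ M)
    (fun s hs hsM => (hx' s hs.1).trans_lt (by rw [hsM]; linarith)) ⟨ht, le_rfl⟩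

theorem exists_pos_le_of_forall_mem_le {ι : Type*} {F : (ι → ℝ) → ℝ} (hF : Monotone F)
    {s : Set ι} (hF_pos : ∀ x, (∀ i, 0 ≤ x i) → (∀ i ∈ s, 0 < x i) → 0 < F x)
    {ε : ℝ} (hε : 0 < ε) :
    ∃ c > 0, ∀ x, (∀ i, 0 ≤ x i) → (∀ i ∈ s, ε ≤ x i) → c ≤ F x := by
  refine ⟨F (s.indicator fun _ => ε), hF_pos _ (fun i => ?_) (fun i hi => ?_), ?_⟩
  · exact Set.indicator_nonneg (fun _ _ => hε.le) i
  · simpa [Set.indicator_of_mem hi] using hε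
  · intro x hx_nonneg hx_ge
    refine hF fun i => ?_
    by_cases hi : i ∈ s
    · simpa [Set.indicator_of_mem hi] using hx_ge i hi
    · simpa [Set.indicator_of_notMem hi] using hx_nonneg i

theorem dotProduct_protocell_field_of_vecMul_eq_zero {m n : Type*} [Fintype m] [Fintype n]
    [DecidableEq m] {S : Matrix m n ℝ} {b : m → ℝ} (hbS : vecMul b S = 0) (v : n → ℝ)
    (w a : m → ℝ) (me : m) (g C : ℝ) :
    b ⬝ᵥ (S *ᵥ v + w - g • Pi.single me 1 - (g / C) • a) =
      b ⬝ᵥ w - g * b me - g / C * (b ⬝ᵥ a) := by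
  simp [dotProduct_sub, dotProduct_add, dotProduct_mulVec, hbS, dotProduct_smul, mul_comm]

theorem protocell_moiety_upper_bound_general
    (N R : ℕ) (S : Matrix (Fin N) (Fin R) ℝ)
    (f : (Fin N → ℝ) → Fin R → ℝ)
    (me : Fin N) (Sme : Finset (Fin N))
    (Cme : ℝ) (hCme : 0 < Cme)
    (fme : (Fin N → ℝ) → ℝ)
    (hfme_nonneg : ∀ x : Fin N → ℝ, (∀ i, 0 ≤ x i) → 0 ≤ fme x)
    (hfme_mono : ∀ x y : Fin N → ℝ, (∀ i, x i ≤ y i) → fme x ≤ fme y)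
    (hfme_pos : ∀ x : Fin N → ℝ, (∀ i, 0 ≤ x i) → (0 < fme x ↔ ∀ i ∈ Sme, 0 < x i))
    (fnu : Fin N → ℝ)
    (A : ℝ → Fin N → ℝ)
    (hA_nonneg : ∀ t ≥ (0:ℝ), ∀ i, 0 ≤ A t i)
    (hODE : ∀ t ≥ (0:ℝ), HasDerivWithinAt A
      (S.mulVec (f (A t)) + fnu - fme (A t) • (Pi.single me 1 : Fin N → ℝ)
        - (fme (A t) / Cme) • A t) (Set.Ici 0) t)
    (ε : ℝ) (hε : 0 < ε)
    (hlow : ∀ t ≥ (0:ℝ), ∀ i ∈ Sme, ε ≤ A t i) :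
    (∀ b : Fin N → ℝ, b ≠ 0 → (∀ i, 0 ≤ b i) → Matrix.vecMul b S = 0 →
      ∃ M : ℝ, ∀ t ≥ (0:ℝ), b ⬝ᵥ A t ≤ M) ∧
    (∀ m : Fin N → ℝ, (∀ i, 0 < m i) → Matrix.vecMul m S = 0 →
      ∃ M : ℝ, ∀ t ≥ (0:ℝ), |m ⬝ᵥ A t| ≤ M) := by
  obtain ⟨c, hc, hc_le⟩ := exists_pos_le_of_forall_mem_le hfme_mono
    (fun x hx => (hfme_pos x hx).2) hε
  have bounded : ∀ b : Fin N → ℝ, (∀ i, 0 ≤ b i) → vecMul b S = 0 →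
      ∃ M : ℝ, ∀ t ≥ (0:ℝ), b ⬝ᵥ A t ≤ M := by
    intro b hb hbS
    have hμ : 0 < c / Cme := div_pos hc hCme
    set M := max (b ⬝ᵥ A 0) ((b ⬝ᵥ fnu + 1) / (c / Cme))
    refine ⟨M, le_of_hasDerivWithinAt_le_sub_mul (K := b ⬝ᵥ fnu) (c := c / Cme)
      (fun t ht => (hODE t ht).const_dotProduct b) (fun t ht => ?_) (le_max_left _ _) ?_⟩
    · have hfme_ge : c ≤ fme (A t) := hc_le _ (hA_nonneg t ht) (hlow t ht)
      have hbA : 0 ≤ b ⬝ᵥ A t := dotProduct_nonneg_of_nonneg hb (hA_nonneg t ht)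
      have hb_me : 0 ≤ fme (A t) * b me := mul_nonneg (hfme_nonneg _ (hA_nonneg t ht)) (hb me)
      have hdecay : c / Cme * (b ⬝ᵥ A t) ≤ fme (A t) / Cme * (b ⬝ᵥ A t) := by gcongr
      rw [dotProduct_protocell_field_of_vecMul_eq_zero hbS]
      linarith
    · calc b ⬝ᵥ fnu < b ⬝ᵥ fnu + 1 := lt_add_one _
        _ = c / Cme * ((b ⬝ᵥ fnu + 1) / (c / Cme)) := (mul_div_cancel₀ _ hμ.ne').symm
        _ ≤ c / Cme * M := mul_le_mul_of_nonneg_left (le_max_right _ _) hμ.le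
  refine ⟨fun b _ => bounded b, fun m hm hmS => ?_⟩
  obtain ⟨M, hM⟩ := bounded m (fun i => (hm i).le) hmS
  refine ⟨M, fun t ht => ?_⟩
  rw [abs_of_nonneg (dotProduct_nonneg_of_nonneg (fun i => (hm i).le) (hA_nonneg t ht))]
  exact hM t ht

/-- Upper bound lemma: if all species of `S_me` stay above some `ε > 0`
along a proto-cell trajectory, then `bᵀA(t)` is bounded above for every moiety
combination `b`; in particular the density `mᵀA(t)` is bounded for any mass vector. -/
theorem protocell_moiety_upper_bound
    (N R : ℕ) (S : Matrix (Fin N) (Fin R) ℝ)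
    (f : (Fin N → ℝ) → Fin R → ℝ) (hf_cont : Continuous f)
    (hf_nonneg : ∀ x : Fin N → ℝ, (∀ i, 0 ≤ x i) → ∀ j, 0 ≤ f x j)
    (me : Fin N) (Sme : Finset (Fin N)) (hme : me ∈ Sme)
    (Cme : ℝ) (hCme : 0 < Cme)
    (fme : (Fin N → ℝ) → ℝ) (hfme_cont : Continuous fme)
    (hfme_nonneg : ∀ x : Fin N → ℝ, (∀ i, 0 ≤ x i) → 0 ≤ fme x)
    (hfme_mono : ∀ x y : Fin N → ℝ, (∀ i, x i ≤ y i) → fme x ≤ fme y)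
    (hfme_pos : ∀ x : Fin N → ℝ, (∀ i, 0 ≤ x i) → (0 < fme x ↔ ∀ i ∈ Sme, 0 < x i))
    (Snu : Finset (Fin N)) (fnu : Fin N → ℝ)
    (hfnu_nonneg : ∀ i, 0 ≤ fnu i) (hfnu_supp : ∀ i ∉ Snu, fnu i = 0)
    (A : ℝ → Fin N → ℝ)
    (hA_nonneg : ∀ t ≥ (0:ℝ), ∀ i, 0 ≤ A t i)
    (hODE : ∀ t ≥ (0:ℝ), HasDerivWithinAt A
      (S.mulVec (f (A t)) + fnu - fme (A t) • (Pi.single me 1 : Fin N → ℝ)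
        - (fme (A t) / Cme) • A t) (Set.Ici 0) t)
    (ε : ℝ) (hε : 0 < ε)
    (hlow : ∀ t ≥ (0:ℝ), ∀ i ∈ Sme, ε ≤ A t i) :
    (∀ b : Fin N → ℝ, b ≠ 0 → (∀ i, 0 ≤ b i) → Matrix.vecMul b S = 0 →
      ∃ M : ℝ, ∀ t ≥ (0:ℝ), b ⬝ᵥ A t ≤ M) ∧
    (∀ m : Fin N → ℝ, (∀ i, 0 < m i) → Matrix.vecMul m S = 0 →
      ∃ M : ℝ, ∀ t ≥ (0:ℝ), |m ⬝ᵥ A t| ≤ M) :=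
  protocell_moiety_upper_bound_general N R S f me Sme Cme hCme fme hfme_nonneg hfme_mono hfme_pos
    fnu A hA_nonneg hODE ε hε hlow
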